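/- arXiv:1809.07044 — 2 statements merged into one kernel-verified Lean document; each statement's English description precedes it below -/
import Mathlib

section
/- Let τ : ℝ → ℝ be continuous, positive and π-periodic, and for ρ > 0 let W_ρ = {x ∈ ℝ² : ∀ θ ∈ ℝ, x • (cos θ, sin θ) ≤ ρ·τ(θ)}. Let 0 < ρ₁ < ρ₂ and ρ₀ > 0. Then there exists x ∈ ℝ² such that x + W_{ρ₀} ⊆ W_{ρ₂} and (x + W_{ρ₀}) ∩ interior(W_{ρ₁}) = ∅ if and only if ρ₀ ≤ (ρ₂ − ρ₁)/2. (Equivalently: the largest Wulff shape that fits in the annulus W_{ρ₂} ∖ interior(W_{ρ₁}) has size parameter (ρ₂ − ρ₁)/2.) -/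
/-!
For a point `x`, the ratio `⟪x, u θ⟫ / τ θ` with `u θ = (cos θ, sin θ)` attains its maximum `λ` at
some `θ₀`: then `x ∈ W_λ`, with equality in the constraint at `θ₀`. If `x + W_{ρ₀}` fits in the
annulus, the two points `x ± (ρ₀ / λ) x` of the translate lie on the ray through `x`, at the levels
`λ ± ρ₀`, which forces `λ + ρ₀ ≤ ρ₂` and `ρ₁ ≤ λ - ρ₀`. Conversely, take `x` of level `ρ₂ - ρ₀`:
then `x + W_{ρ₀} ⊆ W_{ρ₂ - ρ₀} + W_{ρ₀} ⊆ W_{ρ₂}`, and since `W_{ρ₀}` is symmetric every point `y`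
of the translate has `⟪y, u θ₀⟫ ≥ (ρ₂ - 2 ρ₀) τ θ₀ ≥ ρ₁ τ θ₀`, so it misses the interior of `W_{ρ₁}`.
-/

open Real Set
open scoped Pointwise

/-- The Wulff shape associated with the surface tension `τ` and the size parameter `ρ`. -/
def wulff (τ : ℝ → ℝ) (ρ : ℝ) : Set (ℝ × ℝ) :=
  {x : ℝ × ℝ | ∀ θ : ℝ, x.1 * Real.cos θ + x.2 * Real.sin θ ≤ ρ * τ θ}

section Wulff

variable {τ : ℝ → ℝ} {ρ σ : ℝ} {x y : ℝ × ℝ}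

lemma zero_mem_wulff_zero : (0 : ℝ × ℝ) ∈ wulff τ 0 := fun θ => by simp

lemma wulff_mono (hτ : ∀ θ, 0 ≤ τ θ) : Monotone (wulff τ) :=
  fun _ _ hρσ _ hx θ => (hx θ).trans (mul_le_mul_of_nonneg_right hρσ (hτ θ))

lemma neg_mem_wulff (hper : ∀ θ, τ (θ + π) = τ θ) (hx : x ∈ wulff τ ρ) : -x ∈ wulff τ ρ := by
  intro θ
  have h := hx (θ + π)
  rw [cos_add_pi, sin_add_pi, hper] at h
  simp only [Prod.fst_neg, Prod.snd_neg]
  linarith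

lemma smul_mem_wulff {c : ℝ} (hc : 0 ≤ c) (hx : x ∈ wulff τ ρ) : c • x ∈ wulff τ (c * ρ) := by
  intro θ
  have h := mul_le_mul_of_nonneg_left (hx θ) hc
  simp only [Prod.smul_fst, Prod.smul_snd, smul_eq_mul]
  linarith

lemma add_mem_wulff (hx : x ∈ wulff τ ρ) (hy : y ∈ wulff τ σ) : x + y ∈ wulff τ (ρ + σ) := by
  intro θ
  have h := add_le_add (hx θ) (hy θ)
  simp only [Prod.fst_add, Prod.snd_add]
  linarith

lemma ball_subset_wulff {m : ℝ} (hm : ∀ θ, m ≤ τ θ) (hρ : 0 ≤ ρ) :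
    Metric.ball 0 (ρ * m / 2) ⊆ wulff τ ρ := by
  intro v hv θ
  rw [mem_ball_zero_iff] at hv
  have h₁ : v.1 * cos θ ≤ ‖v‖ := (le_abs_self _).trans <| by
    rw [abs_mul]
    exact (mul_le_of_le_one_right (abs_nonneg _) (abs_cos_le_one θ)).trans (norm_fst_le v)
  have h₂ : v.2 * sin θ ≤ ‖v‖ := (le_abs_self _).trans <| by
    rw [abs_mul]
    exact (mul_le_of_le_one_right (abs_nonneg _) (abs_sin_le_one θ)).trans (norm_snd_le v)
  nlinarith [mul_le_mul_of_nonneg_left (hm θ) hρ]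

lemma Function.Periodic.exists_pos_forall_le {f : ℝ → ℝ} {c : ℝ} (hp : Function.Periodic f c)
    (hc : c ≠ 0) (hf : Continuous f) (hpos : ∀ x, 0 < f x) : ∃ m > 0, ∀ x, m ≤ f x := by
  obtain ⟨_, ⟨x₀, rfl⟩, hmin⟩ := (hp.compact_of_continuous hc hf).exists_isLeast (range_nonempty f)
  exact ⟨f x₀, hpos x₀, fun x => hmin ⟨x, rfl⟩⟩

lemma wulff_subset_interior_wulff (hcont : Continuous τ) (hpos : ∀ θ, 0 < τ θ)
    (hper : ∀ θ, τ (θ + π) = τ θ) (hρσ : ρ < σ) : wulff τ ρ ⊆ interior (wulff τ σ) := by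
  obtain ⟨m, hm₀, hm⟩ := Function.Periodic.exists_pos_forall_le hper pi_ne_zero hcont hpos
  intro y hy
  rw [mem_interior_iff_mem_nhds, Metric.mem_nhds_iff]
  refine ⟨(σ - ρ) * m / 2, by nlinarith, fun z hz => ?_⟩
  have hzy : z - y ∈ wulff τ (σ - ρ) :=
    ball_subset_wulff hm (sub_nonneg.2 hρσ.le) (by rwa [mem_ball_zero_iff, ← dist_eq_norm])
  simpa using add_mem_wulff hy hzy

lemma lt_of_mem_interior_wulff (hy : y ∈ interior (wulff τ ρ)) (θ : ℝ) :
    y.1 * cos θ + y.2 * sin θ < ρ * τ θ := by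
  have hnear : ∀ᶠ t in nhds (0 : ℝ), y + t • (cos θ, sin θ) ∈ wulff τ ρ :=
    (continuous_const.add (continuous_id.smul continuous_const)).continuousAt.preimage_mem_nhds
      (by simpa using mem_interior_iff_mem_nhds.1 hy)
  obtain ⟨t, ht, hmem⟩ := hnear.exists_gt
  have h := hmem θ
  simp only [Prod.fst_add, Prod.snd_add, Prod.smul_fst, Prod.smul_snd, smul_eq_mul] at h
  nlinarith [sin_sq_add_cos_sq θ]

lemma exists_mem_wulff_eq (hcont : Continuous τ) (hpos : ∀ θ, 0 < τ θ)
    (hper : ∀ θ, τ (θ + π) = τ θ) (x : ℝ × ℝ) :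
    ∃ l θ₀, x ∈ wulff τ l ∧ x.1 * cos θ₀ + x.2 * sin θ₀ = l * τ θ₀ := by
  set ratio : ℝ → ℝ := fun θ => (x.1 * cos θ + x.2 * sin θ) / τ θ
  have hratio : Function.Periodic ratio (2 * π) := fun θ => by
    simp only [ratio, two_mul, ← add_assoc, cos_add_pi, sin_add_pi, hper, neg_neg]
  have hratio_cont : Continuous ratio := by
    fun_prop (disch := exact fun θ => (hpos θ).ne')
  obtain ⟨_, ⟨θ₀, rfl⟩, hmax⟩ :=
    (hratio.compact_of_continuous (by positivity) hratio_cont).exists_isGreatest (range_nonempty _)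
  refine ⟨ratio θ₀, θ₀, fun θ => ?_, (div_mul_cancel₀ _ (hpos θ₀).ne').symm⟩
  exact (div_le_iff₀ (hpos θ)).1 (hmax ⟨θ, rfl⟩)

lemma exists_mem_wulff_eq_of_nonneg (hcont : Continuous τ) (hpos : ∀ θ, 0 < τ θ)
    (hper : ∀ θ, τ (θ + π) = τ θ) (hρ : 0 ≤ ρ) :
    ∃ x θ₀, x ∈ wulff τ ρ ∧ x.1 * cos θ₀ + x.2 * sin θ₀ = ρ * τ θ₀ := by
  obtain ⟨l, θ₀, he, hθ₀⟩ := exists_mem_wulff_eq hcont hpos hper ((1, 0) : ℝ × ℝ)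
  have hl : 0 < l := by
    have := he 0
    simp only [cos_zero, sin_zero] at this
    nlinarith [hpos 0]
  refine ⟨(ρ / l) • ((1, 0) : ℝ × ℝ), θ₀, ?_, ?_⟩
  · simpa [div_mul_cancel₀ _ hl.ne'] using smul_mem_wulff (div_nonneg hρ hl.le) he
  · norm_num at hθ₀ ⊢
    rw [hθ₀]
    field_simp

lemma le_half_sub_of_vadd_wulff_subset_of_inter_interior_eq_empty (hcont : Continuous τ)
    (hpos : ∀ θ, 0 < τ θ) (hper : ∀ θ, τ (θ + π) = τ θ) {ρ₀ ρ₁ ρ₂ : ℝ} (hρ₀ : 0 ≤ ρ₀)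
    (hρ₁ : 0 < ρ₁) (hsub : x +ᵥ wulff τ ρ₀ ⊆ wulff τ ρ₂)
    (hdisj : (x +ᵥ wulff τ ρ₀) ∩ interior (wulff τ ρ₁) = ∅) : ρ₀ ≤ (ρ₂ - ρ₁) / 2 := by
  have hfar : ∀ w ∈ wulff τ ρ₀, x + w ∉ interior (wulff τ ρ₁) := fun w hw hint =>
    eq_empty_iff_forall_notMem.1 hdisj _ ⟨vadd_mem_vadd_set hw, hint⟩
  obtain ⟨l, θ₀, hx, hθ₀⟩ := exists_mem_wulff_eq hcont hpos hper x
  have hl : ρ₀ < l := by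
    by_contra! h
    have hzero := wulff_subset_interior_wulff hcont hpos hper hρ₁ zero_mem_wulff_zero
    exact hfar (-x) (neg_mem_wulff hper (wulff_mono (fun θ => (hpos θ).le) h hx))
      (by simpa using hzero)
  have hl₀ : 0 < l := hρ₀.trans_lt hl
  have hw : (ρ₀ / l) • x ∈ wulff τ ρ₀ := by
    simpa [div_mul_cancel₀ _ hl₀.ne'] using smul_mem_wulff (div_nonneg hρ₀ hl₀.le) hx
  have hupper : l + ρ₀ ≤ ρ₂ := by
    have h := hsub (vadd_mem_vadd_set hw) θ₀
    simp only [vadd_eq_add, Prod.fst_add, Prod.snd_add, Prod.smul_fst, Prod.smul_snd,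
      smul_eq_mul] at h
    refine le_of_mul_le_mul_right ?_ (hpos θ₀)
    calc (l + ρ₀) * τ θ₀ = (1 + ρ₀ / l) * (x.1 * cos θ₀ + x.2 * sin θ₀) := by
          rw [hθ₀]; field_simp
      _ = _ := by ring
      _ ≤ ρ₂ * τ θ₀ := h
  have hlower : ρ₁ ≤ l - ρ₀ := by
    by_contra! h
    have hx' : x + -((ρ₀ / l) • x) ∈ wulff τ (l - ρ₀) := by
      have hcoef : x + -((ρ₀ / l) • x) = (1 - ρ₀ / l) • x := by
        rw [sub_smul, one_smul, sub_eq_add_neg]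
      rw [hcoef]
      simpa [sub_mul, div_mul_cancel₀ _ hl₀.ne'] using
        smul_mem_wulff (sub_nonneg.2 (div_le_one_of_le₀ hl.le hl₀.le)) hx
    exact hfar _ (neg_mem_wulff hper hw) (wulff_subset_interior_wulff hcont hpos hper h hx')
  linarith

lemma exists_vadd_wulff_subset_and_inter_interior_eq_empty (hcont : Continuous τ)
    (hpos : ∀ θ, 0 < τ θ) (hper : ∀ θ, τ (θ + π) = τ θ) {ρ₀ ρ₁ ρ₂ : ℝ} (hρ₀ : 0 ≤ ρ₀)
    (hρ₁ : 0 ≤ ρ₁) (h : ρ₀ ≤ (ρ₂ - ρ₁) / 2) :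
    ∃ x : ℝ × ℝ, x +ᵥ wulff τ ρ₀ ⊆ wulff τ ρ₂ ∧ (x +ᵥ wulff τ ρ₀) ∩ interior (wulff τ ρ₁) = ∅ := by
  obtain ⟨x, θ₀, hx, hθ₀⟩ :=
    exists_mem_wulff_eq_of_nonneg hcont hpos hper (show 0 ≤ ρ₂ - ρ₀ by linarith)
  refine ⟨x, ?_, eq_empty_iff_forall_notMem.2 ?_⟩
  · rintro _ ⟨w, hw, rfl⟩
    simpa using add_mem_wulff hx hw
  · rintro _ ⟨⟨w, hw, rfl⟩, hint⟩
    have hlt := lt_of_mem_interior_wulff hint θ₀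
    have hge := neg_mem_wulff hper hw θ₀
    simp only [vadd_eq_add, Prod.fst_add, Prod.snd_add, Prod.fst_neg, Prod.snd_neg] at hlt hge
    nlinarith [hpos θ₀]

end Wulff

theorem wulff_fits_in_annulus_iff_general (τ : ℝ → ℝ) (hcont : Continuous τ)
    (hpos : ∀ θ : ℝ, 0 < τ θ) (hper : ∀ θ : ℝ, τ (θ + Real.pi) = τ θ)
    (ρ₀ ρ₁ ρ₂ : ℝ) (hρ₁ : 0 < ρ₁) (hρ₀ : 0 < ρ₀) :
    (∃ x : ℝ × ℝ, (x +ᵥ wulff τ ρ₀) ⊆ wulff τ ρ₂ ∧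
        (x +ᵥ wulff τ ρ₀) ∩ interior (wulff τ ρ₁) = ∅)
      ↔ ρ₀ ≤ (ρ₂ - ρ₁) / 2 :=
  ⟨fun ⟨_, hsub, hdisj⟩ =>
      le_half_sub_of_vadd_wulff_subset_of_inter_interior_eq_empty hcont hpos hper hρ₀.le hρ₁
      hsub hdisj,
    exists_vadd_wulff_subset_and_inter_interior_eq_empty hcont hpos hper hρ₀.le hρ₁.le⟩

/-- A translate of the Wulff shape `W_{ρ₀}` fits in the annulus `W_{ρ₂} ∖ interior W_{ρ₁}`
if and only if `ρ₀ ≤ (ρ₂ - ρ₁) / 2`: the largest Wulff shapes that fit in the annulus have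
size parameter `(ρ₂ - ρ₁) / 2`. -/
theorem wulff_fits_in_annulus_iff (τ : ℝ → ℝ) (hcont : Continuous τ)
    (hpos : ∀ θ : ℝ, 0 < τ θ) (hper : ∀ θ : ℝ, τ (θ + Real.pi) = τ θ)
    (ρ₀ ρ₁ ρ₂ : ℝ) (hρ₁ : 0 < ρ₁) (h₁₂ : ρ₁ < ρ₂) (hρ₀ : 0 < ρ₀) :
    (∃ x : ℝ × ℝ, (x +ᵥ wulff τ ρ₀) ⊆ wulff τ ρ₂ ∧
        (x +ᵥ wulff τ ρ₀) ∩ interior (wulff τ ρ₁) = ∅)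
      ↔ ρ₀ ≤ (ρ₂ - ρ₁) / 2 :=
  wulff_fits_in_annulus_iff_general τ hcont hpos hper ρ₀ ρ₁ ρ₂ hρ₁ hρ₀
end

section
/- Let τ : ℝ → ℝ be continuous, positive and π-periodic, and for ρ > 0 let W_ρ = {x ∈ ℝ² : ∀ θ ∈ ℝ, x • (cos θ, sin θ) ≤ ρ·τ(θ)}. Let ρ > 0, d > 0, θ ∈ ℝ, and set n = (cos θ, sin θ). Suppose x, x', y ∈ ℝ² satisfy: y − x ∈ W_ρ with (y − x) • n = ρ·τ(θ), and x − x' ∈ W_d with (x − x') • n = d·τ(θ). Then y ∈ (x + W_ρ) ∩ (x' + W_{ρ+d}), and every z ∈ (x + W_ρ) ∪ (x' + W_{ρ+d}) satisfies (z − y) • n ≤ 0. -/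
open Real Set
open scoped Pointwise

theorem mem_vadd_set_iff_sub_mem {G : Type*} [AddCommGroup G] {a z : G} {S : Set G} :
    z ∈ a +ᵥ S ↔ z - a ∈ S := by
  rw [mem_vadd_set_iff_neg_vadd_mem, vadd_eq_add, neg_add_eq_sub]

theorem add_mem_wulff_s4 {τ : ℝ → ℝ} {ρ d : ℝ} {a b : ℝ × ℝ} (ha : a ∈ wulff τ ρ)
    (hb : b ∈ wulff τ d) : a + b ∈ wulff τ (ρ + d) := fun φ => by
  simp only [Prod.fst_add, Prod.snd_add]
  linear_combination ha φ + hb φ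

theorem sub_pairing_nonpos_of_mem_vadd_wulff {τ : ℝ → ℝ} {ρ θ : ℝ} {x y z : ℝ × ℝ}
    (hy : (y - x).1 * cos θ + (y - x).2 * sin θ = ρ * τ θ) (hz : z ∈ x +ᵥ wulff τ ρ) :
    (z - y).1 * cos θ + (z - y).2 * sin θ ≤ 0 := by
  have hzθ := mem_vadd_set_iff_sub_mem.1 hz θ
  simp only [Prod.fst_sub, Prod.snd_sub] at hy hzθ ⊢
  linear_combination hzθ - hy

theorem wulff_common_tangent_general (τ : ℝ → ℝ)
    (ρ d θ : ℝ) (x x' y : ℝ × ℝ)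
    (hy : y - x ∈ wulff τ ρ)
    (hy' : (y - x).1 * Real.cos θ + (y - x).2 * Real.sin θ = ρ * τ θ)
    (hx : x - x' ∈ wulff τ d)
    (hx' : (x - x').1 * Real.cos θ + (x - x').2 * Real.sin θ = d * τ θ) :
    y ∈ (x +ᵥ wulff τ ρ) ∩ (x' +ᵥ wulff τ (ρ + d)) ∧
      ∀ z ∈ (x +ᵥ wulff τ ρ) ∪ (x' +ᵥ wulff τ (ρ + d)),
        (z - y).1 * Real.cos θ + (z - y).2 * Real.sin θ ≤ 0 := by
  have hsplit : y - x' = (y - x) + (x - x') := by abel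
  have hy'' : (y - x').1 * cos θ + (y - x').2 * sin θ = (ρ + d) * τ θ := by
    rw [hsplit, Prod.fst_add, Prod.snd_add]
    linear_combination hy' + hx'
  refine ⟨⟨mem_vadd_set_iff_sub_mem.2 hy,
    mem_vadd_set_iff_sub_mem.2 (hsplit ▸ add_mem_wulff_s4 hy hx)⟩, ?_⟩
  rintro z (hz | hz)
  · exact sub_pairing_nonpos_of_mem_vadd_wulff hy' hz
  · exact sub_pairing_nonpos_of_mem_vadd_wulff hy'' hz

/-- Common tangent property: if `n = (cos θ, sin θ)` is the external normal to `x + W_ρ`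
at `y`, and `x'` is placed so that `n` is also the external normal to `x' + W_d` at `x`,
then the Wulff shapes `x + W_ρ` and `x' + W_{ρ+d}` touch at `y` and both lie on the same
side of the common tangent line through `y` with normal `n`. -/
theorem wulff_common_tangent (τ : ℝ → ℝ) (hcont : Continuous τ)
    (hpos : ∀ θ' : ℝ, 0 < τ θ') (hper : ∀ θ' : ℝ, τ (θ' + Real.pi) = τ θ')
    (ρ d θ : ℝ) (hρ : 0 < ρ) (hd : 0 < d) (x x' y : ℝ × ℝ)
    (hy : y - x ∈ wulff τ ρ)
    (hy' : (y - x).1 * Real.cos θ + (y - x).2 * Real.sin θ = ρ * τ θ)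
    (hx : x - x' ∈ wulff τ d)
    (hx' : (x - x').1 * Real.cos θ + (x - x').2 * Real.sin θ = d * τ θ) :
    y ∈ (x +ᵥ wulff τ ρ) ∩ (x' +ᵥ wulff τ (ρ + d)) ∧
      ∀ z ∈ (x +ᵥ wulff τ ρ) ∪ (x' +ᵥ wulff τ (ρ + d)),
        (z - y).1 * Real.cos θ + (z - y).2 * Real.sin θ ≤ 0 :=
  wulff_common_tangent_general τ ρ d θ x x' y hy hy' hx hx'
end
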